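/- arXiv:1403.3458 — 2 statements merged into one kernel-verified Lean document; each statement's English description precedes it below -/
import Mathlib

section
/- Let B be a simple polygon whose boundary is the union of a single edge g (the gate) and a polygonal chain, and let s and t both lie in B. Then for any shortest obstacle-avoiding L1 path π between s and t in the plane (where the complement of B outside g may contain obstacles), there exists an L1 shortest s-t path that lies entirely in B. In particular, replacing the portion of π between its first and last intersection points with g by the straight segment between those two points yields an s-t path inside B of no greater L1 length. -/
/-!
The middle portion of the path runs from `u` to `v`, so by the triangle inequality its
L1 length is at least `d1 u v`, the length of the straight segment `uv`. That segment
lies on the gate, hence in `B`, so the spliced path stays in `B` and is no longer.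
-/

open scoped Classical

/-- Points in the plane. -/
abbrev Pt : Type := ℝ × ℝ

/-- The L1 distance between two points of the plane. -/
noncomputable def d1 (p q : Pt) : ℝ := |p.1 - q.1| + |p.2 - q.2|

/-- The L1 length of a polygonal path given by its list of vertices. -/
noncomputable def len : List Pt → ℝ
  | [] => 0
  | [_] => 0
  | p :: q :: r => d1 p q + len (q :: r)

/-- A polygonal path is monotone in the coordinate `f` if that coordinate is
(weakly) monotone along the path, in one of the two directions. -/
def MonoCoord (f : Pt → ℝ) (L : List Pt) : Prop :=
  L.Chain' (fun a b => f a ≤ f b) ∨ L.Chain' (fun a b => f b ≤ f a)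

/-- A polygonal path is xy-monotone if it is both x-monotone and y-monotone. -/
def XYMono (L : List Pt) : Prop := MonoCoord Prod.fst L ∧ MonoCoord Prod.snd L

/-- A polygonal path lies in a set `B` if all its vertices and all its
segments lie in `B`. -/
def PathIn (B : Set Pt) (L : List Pt) : Prop :=
  (∀ p ∈ L, p ∈ B) ∧ L.Chain' (fun a b => segment ℝ a b ⊆ B)

@[simp]
lemma d1_self (p : Pt) : d1 p p = 0 := by simp [d1]

lemma d1_triangle (p q r : Pt) : d1 p r ≤ d1 p q + d1 q r := by
  unfold d1
  linarith [abs_sub_le p.1 q.1 r.1, abs_sub_le p.2 q.2 r.2]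

lemma len_cons_cons (p q : Pt) (r : List Pt) : len (p :: q :: r) = d1 p q + len (q :: r) :=
  rfl

lemma len_cons_of_head? {L : List Pt} {q : Pt} (hL : L.head? = some q) (p : Pt) :
    len (p :: L) = d1 p q + len L := by
  obtain _ | ⟨q', L'⟩ := L
  · simp at hL
  · obtain rfl : q' = q := by simpa using hL
    rfl

lemma len_append {L M : List Pt} {x y : Pt} (hL : L.getLast? = some x) (hM : M.head? = some y) :
    len (L ++ M) = len L + d1 x y + len M := by
  induction L with
  | nil => simp at hL
  | cons p L ih =>
    obtain _ | ⟨q, L'⟩ := L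
    · obtain rfl : p = x := by simpa using hL
      simp [len_cons_of_head? hM, len]
    · have hL' : (q :: L').getLast? = some x := by rwa [List.getLast?_cons_cons] at hL
      rw [List.cons_append, List.cons_append, len_cons_cons, ← List.cons_append, ih hL',
        len_cons_cons]
      ring

lemma d1_le_len {L : List Pt} {x y : Pt} (hx : L.head? = some x) (hy : L.getLast? = some y) :
    d1 x y ≤ len L := by
  induction L generalizing x with
  | nil => simp at hx
  | cons p L ih =>
    obtain rfl : p = x := by simpa using hx
    obtain _ | ⟨q, L'⟩ := L
    · obtain rfl : p = y := by simpa using hy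
      simp [len]
    · rw [List.getLast?_cons_cons] at hy
      rw [len_cons_cons]
      linarith [ih rfl hy, d1_triangle p q y]

lemma len_append_le_len_append_append {L P M : List Pt} {x y : Pt}
    (hL : L.getLast? = some x) (hPx : P.head? = some x) (hPy : P.getLast? = some y)
    (hM : M.head? = some y) :
    len (L ++ M) ≤ len (L ++ P ++ M) := by
  have hP : P ≠ [] := by rintro rfl; simp at hPx
  have hLP : (L ++ P).getLast? = some y := by rwa [List.getLast?_append_of_ne_nil _ hP]
  rw [len_append hL hM, len_append hLP hM, len_append hL hPx]
  simp only [d1_self]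
  linarith [d1_le_len hPx hPy]

lemma PathIn.append {B : Set Pt} {L M : List Pt} {x y : Pt} (hL : PathIn B L) (hM : PathIn B M)
    (hx : L.getLast? = some x) (hy : M.head? = some y) (hxy : segment ℝ x y ⊆ B) :
    PathIn B (L ++ M) := by
  refine ⟨fun p hp => (List.mem_append.mp hp).elim (hL.1 p) (hM.1 p), ?_⟩
  refine List.isChain_append.mpr ⟨hL.2, hM.2, ?_⟩
  rintro x' hx' y' hy'
  rw [hx, Option.mem_some_iff] at hx'
  rw [hy, Option.mem_some_iff] at hy'
  subst hx' hy'
  exact hxy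

theorem bay_shortest_path_stays_in_bay_general (B : Set Pt) (a b s t u v : Pt)
    (P1 P2 P3 : List Pt)
    (hgate : segment ℝ a b ⊆ B)
    (hu : u ∈ segment ℝ a b) (hv : v ∈ segment ℝ a b)
    (hP1 : PathIn B P1) (hP3 : PathIn B P3)
    (h1h : P1.head? = some s) (h1l : P1.getLast? = some u)
    (h2h : P2.head? = some u) (h2l : P2.getLast? = some v)
    (h3h : P3.head? = some v) (h3l : P3.getLast? = some t) :
    PathIn B (P1 ++ P3) ∧
    (P1 ++ P3).head? = some s ∧ (P1 ++ P3).getLast? = some t ∧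
    len (P1 ++ P3) ≤ len (P1 ++ P2 ++ P3) ∧
    ((∀ M : List Pt, M.head? = some s → M.getLast? = some t →
        len (P1 ++ P2 ++ P3) ≤ len M) →
      ∀ M : List Pt, M.head? = some s → M.getLast? = some t →
        len (P1 ++ P3) ≤ len M) := by
  have huv : segment ℝ u v ⊆ B := ((convex_segment a b).segment_subset hu hv).trans hgate
  have hlen : len (P1 ++ P3) ≤ len (P1 ++ P2 ++ P3) :=
    len_append_le_len_append_append h1l h2h h2l h3h
  refine ⟨hP1.append hP3 h1l h3h huv, by simp [List.head?_append, h1h],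
    by simp [List.getLast?_append, h3l], hlen, ?_⟩
  exact fun hmin M hMs hMt => hlen.trans (hmin M hMs hMt)

/-- `B` is a simple polygon (a bay) whose boundary shares exactly
the gate `g = segment a b` with the outside; `s, t ∈ B`. Any s-t path `π`
decomposes as `P1 ++ P2 ++ P3` where `P1 ⊆ B` goes from `s` to the first
gate-crossing point `u ∈ g`, `P2` is the (possibly outside) portion from `u`
to the last gate-crossing point `v ∈ g`, and `P3 ⊆ B` goes from `v` to `t`.
Replacing the middle portion by the straight segment `uv ⊆ g` yields an s-t
path lying entirely in `B` of no greater L1 length; in particular if `π` was a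
shortest obstacle-avoiding path, the new path is an L1 shortest s-t path. -/
theorem bay_shortest_path_stays_in_bay (B : Set Pt) (a b s t u v : Pt)
    (P1 P2 P3 : List Pt)
    (hgate : segment ℝ a b ⊆ B) (hs : s ∈ B) (ht : t ∈ B)
    (hu : u ∈ segment ℝ a b) (hv : v ∈ segment ℝ a b)
    (hP1 : PathIn B P1) (hP3 : PathIn B P3)
    (h1h : P1.head? = some s) (h1l : P1.getLast? = some u)
    (h2h : P2.head? = some u) (h2l : P2.getLast? = some v)
    (h3h : P3.head? = some v) (h3l : P3.getLast? = some t) :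
    PathIn B (P1 ++ P3) ∧
    (P1 ++ P3).head? = some s ∧ (P1 ++ P3).getLast? = some t ∧
    len (P1 ++ P3) ≤ len (P1 ++ P2 ++ P3) ∧
    ((∀ M : List Pt, M.head? = some s → M.getLast? = some t →
        len (P1 ++ P2 ++ P3) ≤ len M) →
      ∀ M : List Pt, M.head? = some s → M.getLast? = some t →
        len (P1 ++ P3) ≤ len M) :=
  bay_shortest_path_stays_in_bay_general B a b s t u v P1 P2 P3 hgate hu hv hP1 hP3 h1h h1l h2h h2l
    h3h h3l
end

section
/- Let Q be a connected polygonal region and let V(Q) be a finite set of points on ∂Q that includes every extreme vertex of Q (a vertex both of whose incident boundary edges lie on the same side of the vertical line through it, or the same side of the horizontal line through it). Then between any two points of V(Q) that are consecutive along ∂Q, the boundary arc of ∂Q containing no other point of V(Q) is xy-monotone. -/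
open scoped Classical

/-- The set of points traced out by a polygonal path. -/
def trace : List Pt → Set Pt
  | [] => ∅
  | [p] => {p}
  | p :: q :: r => segment ℝ p q ∪ trace (q :: r)

/-! Interior vertices of such an arc are not in `S`, hence not extreme: across each of them
both coordinates are strictly monotone. So each coordinate keeps, along the whole arc, the
direction it has on the first edge. -/

def IsMiddleExtr {α : Type*} [LinearOrder α] (a b c : α) : Prop :=
  (a ≤ b ∧ c ≤ b) ∨ (b ≤ a ∧ b ≤ c)

def IsExtremeTriple (p q r : Pt) : Prop :=
  IsMiddleExtr p.1 q.1 r.1 ∨ IsMiddleExtr p.2 q.2 r.2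

theorem List.isChain_of_getElem_propagate {α : Type*} {R : α → α → Prop} {l : List α}
    (hstart : ∀ h : 1 < l.length, R l[0] l[1])
    (hstep : ∀ t (h : t + 2 < l.length), R l[t] l[t + 1] → R l[t + 1] l[t + 2]) :
    l.IsChain R := by
  have hall : ∀ t (h : t + 1 < l.length), R l[t] l[t + 1] := by
    intro t
    induction t with
    | zero => exact hstart
    | succ s ih => exact fun h => hstep s h (ih (by omega))
  exact List.isChain_iff_getElem.2 hall

theorem isChain_or_of_forall_not_isMiddleExtr {α β : Type*} [LinearOrder α] (f : β → α)
    {l : List β}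
    (h : ∀ t (ht : t + 2 < l.length), ¬IsMiddleExtr (f l[t]) (f l[t + 1]) (f l[t + 2])) :
    l.IsChain (fun a b => f a ≤ f b) ∨ l.IsChain (fun a b => f b ≤ f a) := by
  obtain _ | ⟨a, _ | ⟨b, l'⟩⟩ := l
  · simp
  · simp
  rcases le_total (f a) (f b) with hab | hba
  · exact .inl <| List.isChain_of_getElem_propagate (fun _ => hab) fun t ht hle =>
      le_of_not_ge fun hdown => h t ht (.inl ⟨hle, hdown⟩)
  · exact .inr <| List.isChain_of_getElem_propagate (fun _ => hba) fun t ht hle =>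
      le_of_not_ge fun hup => h t ht (.inr ⟨hle, hup⟩)

theorem xyMono_of_forall_not_isExtremeTriple {M : List Pt}
    (h : ∀ t (ht : t + 2 < M.length), ¬IsExtremeTriple M[t] M[t + 1] M[t + 2]) :
    XYMono M :=
  ⟨isChain_or_of_forall_not_isMiddleExtr Prod.fst fun t ht hx => h t ht (.inl hx),
    isChain_or_of_forall_not_isMiddleExtr Prod.snd fun t ht hy => h t ht (.inr hy)⟩

theorem arcs_between_extreme_vertices_are_monotone_general
    (L : List Pt) (S : Set Pt)
    (hext : ∀ k, k + 2 < L.length →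
      ((((L.getD k (0, 0)).1 ≤ (L.getD (k+1) (0, 0)).1 ∧
         (L.getD (k+2) (0, 0)).1 ≤ (L.getD (k+1) (0, 0)).1) ∨
        ((L.getD (k+1) (0, 0)).1 ≤ (L.getD k (0, 0)).1 ∧
         (L.getD (k+1) (0, 0)).1 ≤ (L.getD (k+2) (0, 0)).1)) ∨
       (((L.getD k (0, 0)).2 ≤ (L.getD (k+1) (0, 0)).2 ∧
         (L.getD (k+2) (0, 0)).2 ≤ (L.getD (k+1) (0, 0)).2) ∨
        ((L.getD (k+1) (0, 0)).2 ≤ (L.getD k (0, 0)).2 ∧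
         (L.getD (k+1) (0, 0)).2 ≤ (L.getD (k+2) (0, 0)).2))) →
      L.getD (k+1) (0, 0) ∈ S) :
    ∀ i j : ℕ, i < j → j < L.length →
      L.getD i (0, 0) ∈ S → L.getD j (0, 0) ∈ S →
      (∀ k, i < k → k < j → L.getD k (0, 0) ∉ S) →
      XYMono ((L.drop i).take (j - i + 1)) := by
  intro i j hij hjL _ _ hinner
  refine xyMono_of_forall_not_isExtremeTriple fun t ht hturn => ?_
  rw [List.length_take, List.length_drop] at ht
  have hlen : i + t + 2 < L.length := by omega
  simp only [List.getElem_take, List.getElem_drop] at hturn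
  refine hinner (i + t + 1) (by omega) (by omega) (hext (i + t) hlen ?_)
  rwa [List.getD_eq_getElem _ _ hlen, List.getD_eq_getElem _ _ (by omega),
    List.getD_eq_getElem _ _ (by omega)]

/-- `Q` is a region bounded by the simple closed polygonal
curve with vertex list `L` (closed: first = last vertex; simple: no repeated
vertices otherwise), and `S` is a set of boundary points containing every
extreme vertex of `Q` — a vertex whose two incident edges lie on the same
closed side of the vertical line through it, or of the horizontal line
through it. Then the boundary arc between any two points of `S` consecutive
along `∂Q` (i.e. containing no point of `S` in its interior) is xy-monotone. -/
theorem arcs_between_extreme_vertices_are_monotone (Q : Set Pt)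
    (L : List Pt) (S : Set Pt)
    (hclosed : L.head? = L.getLast?) (hsimple : L.dropLast.Nodup)
    (hbd : ∀ x ∈ trace L, x ∈ frontier Q)
    (hext : ∀ k, k + 2 < L.length →
      ((((L.getD k (0, 0)).1 ≤ (L.getD (k+1) (0, 0)).1 ∧
         (L.getD (k+2) (0, 0)).1 ≤ (L.getD (k+1) (0, 0)).1) ∨
        ((L.getD (k+1) (0, 0)).1 ≤ (L.getD k (0, 0)).1 ∧
         (L.getD (k+1) (0, 0)).1 ≤ (L.getD (k+2) (0, 0)).1)) ∨
       (((L.getD k (0, 0)).2 ≤ (L.getD (k+1) (0, 0)).2 ∧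
         (L.getD (k+2) (0, 0)).2 ≤ (L.getD (k+1) (0, 0)).2) ∨
        ((L.getD (k+1) (0, 0)).2 ≤ (L.getD k (0, 0)).2 ∧
         (L.getD (k+1) (0, 0)).2 ≤ (L.getD (k+2) (0, 0)).2))) →
      L.getD (k+1) (0, 0) ∈ S) :
    ∀ i j : ℕ, i < j → j < L.length →
      L.getD i (0, 0) ∈ S → L.getD j (0, 0) ∈ S →
      (∀ k, i < k → k < j → L.getD k (0, 0) ∉ S) →
      XYMono ((L.drop i).take (j - i + 1)) :=
  arcs_between_extreme_vertices_are_monotone_general L S hext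
end
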